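/- arXiv:2210.16878 — 2 statements merged into one kernel-verified Lean document; each statement's English description precedes it below -/
import Mathlib

section
/- Combining the two integral identities, k[u] := ∫(Δu + κ|∇u|²/u)(Δu + (β−1)|∇u|²/u) dσ = ∫ q[u] dσ + d∫|∇u|² dσ, where q[u] = (d/(d−1))(a‖Lu‖² − 2b Lu:Mu + c‖Mu‖²) with a = 1, b = (κ+β−1)(d−1)/(d+2), c = (κ+β−1)d/(d+2) + κ(β−1). -/
set_option autoImplicit false

open MeasureTheory

/-! Expanding the product, `k[u] = ∫(Δu)² + (κ+β−1)∫Δu·w + κ(β−1)∫w²` with `w = |∇u|²/u`;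
substituting the three identities and collecting the coefficients of `∫‖Lu‖²`, `∫Lu:Mu` and
`∫‖Mu‖²` gives `a`, `b` and `c`. -/

section

variable {Ω : Type*} [MeasurableSpace Ω] {σ : Measure Ω}

theorem integral_add_mul_mul_add_mul {f g : Ω → ℝ} (a b : ℝ)
    (hf : Integrable (fun x => f x ^ 2) σ) (hfg : Integrable (fun x => f x * g x) σ)
    (hg : Integrable (fun x => g x ^ 2) σ) :
    ∫ x, (f x + a * g x) * (f x + b * g x) ∂σ =
      ∫ x, f x ^ 2 ∂σ + (a + b) * ∫ x, f x * g x ∂σ + a * b * ∫ x, g x ^ 2 ∂σ := by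
  calc ∫ x, (f x + a * g x) * (f x + b * g x) ∂σ
      = ∫ x, (f x ^ 2 + (a + b) * (f x * g x) + a * b * g x ^ 2) ∂σ := by
        congr 1; funext x; ring
    _ = _ := by
        rw [integral_add (hf.fun_add (hfg.const_mul _)) (hg.const_mul _),
          integral_add hf (hfg.const_mul _), integral_const_mul, integral_const_mul]

theorem integral_const_mul_mul_sub_mul_add_mul {f g h : Ω → ℝ} (k a b c : ℝ)
    (hf : Integrable f σ) (hg : Integrable g σ) (hh : Integrable h σ) :
    ∫ x, k * (a * f x - b * g x + c * h x) ∂σ =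
      k * (a * ∫ x, f x ∂σ - b * ∫ x, g x ∂σ + c * ∫ x, h x ∂σ) := by
  rw [integral_const_mul,
    integral_add (f := fun x => a * f x - b * g x) ((hf.const_mul a).sub (hg.const_mul b))
      (hh.const_mul c),
    integral_sub (hf.const_mul _) (hg.const_mul _),
    integral_const_mul, integral_const_mul, integral_const_mul]

end

theorem stmt_17_general {Ω : Type*} [MeasurableSpace Ω] (σ : Measure Ω)
    (d : ℕ) (hd : 2 ≤ d) (κ β : ℝ)
    (lap w LnormSq MnormSq LM gradSq : Ω → ℝ)
    (hlap2 : Integrable (fun x => lap x ^ 2) σ)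
    (hlapw : Integrable (fun x => lap x * w x) σ)
    (hw2 : Integrable (fun x => w x ^ 2) σ)
    (hL : Integrable LnormSq σ) (hM : Integrable MnormSq σ)
    (hLM : Integrable LM σ)
    (h1 : ∫ x, lap x ^ 2 ∂σ =
      (d / (d - 1) : ℝ) * ∫ x, LnormSq x ∂σ + d * ∫ x, gradSq x ∂σ)
    (h2 : ∫ x, lap x * w x ∂σ =
      (d / (d + 2) : ℝ) * ((d / (d - 1) : ℝ) * ∫ x, MnormSq x ∂σ - 2 * ∫ x, LM x ∂σ))
    (h3 : ∫ x, w x ^ 2 ∂σ = (d / (d - 1) : ℝ) * ∫ x, MnormSq x ∂σ) :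
    ∫ x, (lap x + κ * w x) * (lap x + (β - 1) * w x) ∂σ =
      (∫ x, (d / (d - 1) : ℝ) *
          (1 * LnormSq x - 2 * ((κ + β - 1) * (d - 1) / (d + 2)) * LM x
            + ((κ + β - 1) * d / (d + 2) + κ * (β - 1)) * MnormSq x) ∂σ)
        + d * ∫ x, gradSq x ∂σ := by
  have hd1 : (d : ℝ) - 1 ≠ 0 := by
    have : (2 : ℝ) ≤ d := by exact_mod_cast hd
    linarith
  have hd2 : (d : ℝ) + 2 ≠ 0 := by positivity
  rw [integral_add_mul_mul_add_mul _ _ hlap2 hlapw hw2,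
    integral_const_mul_mul_sub_mul_add_mul _ _ _ _ hL hLM hM, h1, h2, h3]
  field_simp
  ring

/-- Combination of the two integral identities: with `lap = Δu`, `w = |∇u|²/u`,
`k[u] = ∫(Δu + κ|∇u|²/u)(Δu + (β−1)|∇u|²/u) dσ = ∫ q[u] dσ + d∫|∇u|² dσ`, where
`q[u] = (d/(d−1))(a‖Lu‖² − 2b Lu:Mu + c‖Mu‖²)` and `a = 1`,
`b = (κ+β−1)(d−1)/(d+2)`, `c = (κ+β−1)d/(d+2) + κ(β−1)`.  The identities
`∫(Δu)² = (d/(d−1))∫‖Lu‖² + d∫|∇u|²`,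
`∫Δu·|∇u|²/u = (d/(d+2))[(d/(d−1))∫‖Mu‖² − 2∫Lu:Mu]` and
`∫|∇u|⁴/u² = (d/(d−1))∫‖Mu‖²` are given as hypotheses. -/
theorem stmt_17 {Ω : Type*} [MeasurableSpace Ω] (σ : Measure Ω) [IsProbabilityMeasure σ]
    (d : ℕ) (hd : 2 ≤ d) (κ β : ℝ)
    (lap w LnormSq MnormSq LM gradSq : Ω → ℝ)
    (hlap2 : Integrable (fun x => lap x ^ 2) σ)
    (hlapw : Integrable (fun x => lap x * w x) σ)
    (hw2 : Integrable (fun x => w x ^ 2) σ)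
    (hL : Integrable LnormSq σ) (hM : Integrable MnormSq σ)
    (hLM : Integrable LM σ) (hg : Integrable gradSq σ)
    (h1 : ∫ x, lap x ^ 2 ∂σ =
      (d / (d - 1) : ℝ) * ∫ x, LnormSq x ∂σ + d * ∫ x, gradSq x ∂σ)
    (h2 : ∫ x, lap x * w x ∂σ =
      (d / (d + 2) : ℝ) * ((d / (d - 1) : ℝ) * ∫ x, MnormSq x ∂σ - 2 * ∫ x, LM x ∂σ))
    (h3 : ∫ x, w x ^ 2 ∂σ = (d / (d - 1) : ℝ) * ∫ x, MnormSq x ∂σ) :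
    ∫ x, (lap x + κ * w x) * (lap x + (β - 1) * w x) ∂σ =
      (∫ x, (d / (d - 1) : ℝ) *
          (1 * LnormSq x - 2 * ((κ + β - 1) * (d - 1) / (d + 2)) * LM x
            + ((κ + β - 1) * d / (d + 2) + κ * (β - 1)) * MnormSq x) ∂σ)
        + d * ∫ x, gradSq x ∂σ :=
  stmt_17_general σ d hd κ β lap w LnormSq MnormSq LM gradSq hlap2 hlapw hw2 hL hM hLM h1 h2 h3
end

section
/- Suppose u ∈ H¹(S^d,dσ) is a non-constant optimizer for inequality (GNS2) with ‖u‖ₚ = 1, and set a = ‖∇u‖₂², b = ‖u‖₂² < 1. If the flow stationarity condition θ(λ−d)/((p−2)a + λb) + (1−θ)/b = 0 holds together with (p−2)a + λb < λ b^{1/θ −1}, then one cannot have both θ < 1/2 and λ ≤ θd. (Equivalently: θ < 1/2 and λ ≤ θd imply λ − θd > θ(λ−d) + (1−θ)λ b^{1/θ−2} > 0, a contradiction.) -/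
set_option autoImplicit false

/-!
Clearing the denominators of the stationarity condition and using
`(p - 2) a + λ b < λ b ^ (1/θ - 1)` gives `θ (λ - d) + (1 - θ) λ b ^ (1/θ - 2) > 0`.
When `θ < 1/2` the exponent `1/θ - 2` is positive, so `b ^ (1/θ - 2) < 1` and the same
expression is `< λ - θ d`; hence `λ > θ d`.
-/

open Real

section StationaryOptimizer

variable {θ lam d A b : ℝ}

theorem stationary_combination_pos (hθ : θ < 1) (hA : 0 < A) (hb : 0 < b)
    (hstat : θ * (lam - d) / A + (1 - θ) / b = 0) (hopt : A < lam * b ^ (1 / θ - 1)) :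
    0 < θ * (lam - d) + (1 - θ) * lam * b ^ (1 / θ - 2) := by
  have hsplit : b ^ (1 / θ - 1) = b ^ (1 / θ - 2) * b := by
    rw [show 1 / θ - 1 = (1 / θ - 2) + 1 by ring, rpow_add hb, rpow_one]
  have hcleared : θ * (lam - d) = -((1 - θ) * (A / b)) := by
    field_simp at hstat ⊢
    linarith
  have hA_div : A / b < lam * b ^ (1 / θ - 2) := by
    rw [div_lt_iff₀ hb, mul_assoc, ← hsplit]
    exact hopt
  rw [hcleared]
  nlinarith

theorem stationary_combination_lt_sub (hθ0 : 0 < θ) (hθ : θ < 1 / 2) (hlam : 0 < lam)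
    (hb0 : 0 < b) (hb1 : b < 1) :
    θ * (lam - d) + (1 - θ) * lam * b ^ (1 / θ - 2) < lam - θ * d := by
  have hexp : 0 < 1 / θ - 2 := by
    rw [sub_pos, lt_div_iff₀ hθ0]
    linarith
  have hpow : b ^ (1 / θ - 2) < 1 := rpow_lt_one hb0.le hb1 hexp
  have hcoef : 0 < (1 - θ) * lam := mul_pos (by linarith) hlam
  nlinarith

end StationaryOptimizer

theorem stmt_18_general (d : ℕ) (p θ lam a b : ℝ) (hp : 2 < p)
    (hθp : 1 - 2 / p < θ)
    (ha : 0 ≤ a) (hb0 : 0 < b) (hb1 : b < 1) (hlam : 0 < lam)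
    (hstat : θ * (lam - d) / ((p - 2) * a + lam * b) + (1 - θ) / b = 0)
    (hopt : (p - 2) * a + lam * b < lam * b ^ (1 / θ - 1)) :
    ¬(θ < 1 / 2 ∧ lam ≤ θ * d) := by
  rintro ⟨hθ, hld⟩
  have hθ0 : 0 < θ := by
    have : 2 / p < 1 := (div_lt_one (by linarith)).mpr hp
    linarith
  have hA : 0 < (p - 2) * a + lam * b :=
    add_pos_of_nonneg_of_pos (mul_nonneg (by linarith) ha) (mul_pos hlam hb0)
  have hlow := stationary_combination_pos (by linarith) hA hb0 hstat hopt
  have hup := stationary_combination_lt_sub (d := d) hθ0 hθ hlam hb0 hb1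
  linarith

/-- Algebraic core of the symmetry proof for `μ₂`: let `u` be a non-constant
optimizer normalized by `‖u‖ₚ = 1`, with `a = ‖∇u‖₂² ≥ 0` and `b = ‖u‖₂² ∈ (0,1)`.
If the flow stationarity condition `θ(λ−d)/((p−2)a + λb) + (1−θ)/b = 0` holds
together with `(p−2)a + λb < λ b^{1/θ−1}`, then one cannot have both `θ < 1/2`
and `λ ≤ θd`. -/
theorem stmt_18 (d : ℕ) (hd : 1 ≤ d) (p θ lam a b : ℝ) (hp : 2 < p)
    (hθl : (d : ℝ) * (p - 2) / (2 * p) ≤ θ) (hθr : θ ≤ 1) (hθp : 1 - 2 / p < θ)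
    (ha : 0 ≤ a) (hb0 : 0 < b) (hb1 : b < 1) (hlam : 0 < lam)
    (hstat : θ * (lam - d) / ((p - 2) * a + lam * b) + (1 - θ) / b = 0)
    (hopt : (p - 2) * a + lam * b < lam * b ^ (1 / θ - 1)) :
    ¬(θ < 1 / 2 ∧ lam ≤ θ * d) :=
  stmt_18_general d p θ lam a b hp hθp ha hb0 hb1 hlam hstat hopt
end
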